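/- arXiv:0910.2177 — 5 statements merged into one kernel-verified Lean document; each statement's English description precedes it below -/
import Mathlib

section
/- There exists a numerical constant c > 0 such that for every integer q ≥ 1, every interval T ⊂ ℝ of finite length |T|, and every collection of points s_1 < s_2 < … < s_{2q} all belonging to T, one has max_{1 < r ≤ 2q} Σ_{i=1}^{r−1} 1/(s_r − s_i) ≥ c · (q/|T|) · ln q. -/
open Finset

/-- AM-HM style: card² ≤ (∑ x)·(∑ x⁻¹) for positive x. -/
lemma card_sq_le_sum_mul_sum_inv (t : Finset ℕ) (x : ℕ → ℝ)
    (hx : ∀ i ∈ t, 0 < x i) :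
    (t.card : ℝ) ^ 2 ≤ (∑ i ∈ t, x i) * ∑ i ∈ t, (x i)⁻¹ := by
  have h := Finset.sum_mul_sq_le_sq_mul_sq t (fun i => Real.sqrt (x i))
      (fun i => (Real.sqrt (x i))⁻¹)
  have h1 : ∑ i ∈ t, Real.sqrt (x i) * (Real.sqrt (x i))⁻¹ = (t.card : ℝ) := by
    have hcg : ∀ i ∈ t, Real.sqrt (x i) * (Real.sqrt (x i))⁻¹ = 1 := fun i hi =>
      mul_inv_cancel₀ (Real.sqrt_ne_zero'.mpr (hx i hi))
    rw [Finset.sum_congr rfl hcg, Finset.sum_const, nsmul_eq_mul, mul_one]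
  have h2 : ∀ i ∈ t, Real.sqrt (x i) ^ 2 = x i := fun i hi =>
    Real.sq_sqrt (hx i hi).le
  have h3 : ∀ i ∈ t, ((Real.sqrt (x i))⁻¹) ^ 2 = (x i)⁻¹ := fun i hi => by
    rw [inv_pow, Real.sq_sqrt (hx i hi).le]
  calc (t.card : ℝ) ^ 2 = (∑ i ∈ t, Real.sqrt (x i) * (Real.sqrt (x i))⁻¹) ^ 2 := by rw [h1]
    _ ≤ (∑ i ∈ t, Real.sqrt (x i) ^ 2) * ∑ i ∈ t, ((Real.sqrt (x i))⁻¹) ^ 2 := h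
    _ = (∑ i ∈ t, x i) * ∑ i ∈ t, (x i)⁻¹ := by
        rw [Finset.sum_congr rfl h2, Finset.sum_congr rfl h3]

/-- Lemma 1 of the paper: there is a numerical constant `c > 0` such that for every
integer `q ≥ 1` and points `s 1 < s 2 < … < s (2q)` lying in an interval of length `L > 0`,
one has `max_{1 < r ≤ 2q} ∑_{i=1}^{r-1} 1/(s r - s i) ≥ c * (q / L) * ln q`. -/
theorem haar_critical_stmt0 :
    ∃ c : ℝ, 0 < c ∧
      ∀ (q : ℕ), 1 ≤ q →
      ∀ (L : ℝ), 0 < L →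
      ∀ (s : ℕ → ℝ),
        (∀ i ∈ Finset.Icc 1 (2 * q), ∀ i' ∈ Finset.Icc 1 (2 * q), i < i' → s i < s i') →
        (∃ a : ℝ, ∀ i ∈ Finset.Icc 1 (2 * q), s i ∈ Set.Icc a (a + L)) →
        ∃ r : ℕ, 1 < r ∧ r ≤ 2 * q ∧
          c * ((q : ℝ) / L) * Real.log q ≤ ∑ i ∈ Finset.Icc 1 (r - 1), 1 / (s r - s i) := by
  refine ⟨1/2, by norm_num, fun q hq L hL s hmono ⟨a, ha⟩ => ?_⟩
  have hq0 : (0:ℝ) < q := by positivity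
  -- positivity of differences
  have hpos : ∀ i r : ℕ, 1 ≤ i → i < r → r ≤ 2 * q → 0 < s r - s i := by
    intro i r h1 h2 h3
    have := hmono i (Finset.mem_Icc.mpr ⟨h1, by omega⟩) r (Finset.mem_Icc.mpr ⟨by omega, h3⟩) h2
    linarith
  -- Step A: chain sums
  have stepA : ∀ k ∈ Finset.Icc 1 q,
      ∑ r ∈ Finset.Ioc k (2*q), (s r - s (r - k)) ≤ (k : ℝ) * L := by
    intro k hk
    rw [Finset.mem_Icc] at hk
    have hk2q : k ≤ 2*q := by omega
    have hshift : ∑ r ∈ Finset.Ioc k (2*q), s (r - k) = ∑ i ∈ Finset.Ioc 0 (2*q - k), s i := by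
      rw [show Finset.Ioc k (2*q) = (Finset.Ioc 0 (2*q - k)).map (addRightEmbedding k) by
        rw [Finset.map_add_right_Ioc, Nat.zero_add, Nat.sub_add_cancel hk2q]]
      rw [Finset.sum_map]
      refine Finset.sum_congr rfl fun i _ => ?_
      simp [addRightEmbedding]
    have e1 : (∑ i ∈ Finset.Ioc 0 k, s i) + ∑ r ∈ Finset.Ioc k (2*q), s r
        = ∑ i ∈ Finset.Ioc 0 (2*q), s i :=
      Finset.sum_Ioc_consecutive _ (Nat.zero_le k) hk2q
    have e2 : (∑ i ∈ Finset.Ioc 0 (2*q - k), s i) + ∑ r ∈ Finset.Ioc (2*q - k) (2*q), s r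
        = ∑ i ∈ Finset.Ioc 0 (2*q), s i :=
      Finset.sum_Ioc_consecutive _ (Nat.zero_le _) (by omega)
    have hub : ∑ r ∈ Finset.Ioc (2*q - k) (2*q), s r ≤ (k:ℝ) * (a + L) := by
      have := Finset.sum_le_card_nsmul (Finset.Ioc (2*q - k) (2*q)) s (a + L)
        (fun r hr => by
          rw [Finset.mem_Ioc] at hr
          exact (ha r (Finset.mem_Icc.mpr ⟨by omega, hr.2⟩)).2)
      rwa [Nat.card_Ioc, nsmul_eq_mul, show 2*q - (2*q - k) = k by omega] at this
    have hlb : (k:ℝ) * a ≤ ∑ i ∈ Finset.Ioc 0 k, s i := by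
      have := Finset.card_nsmul_le_sum (Finset.Ioc 0 k) s a
        (fun i hi => by
          rw [Finset.mem_Ioc] at hi
          exact (ha i (Finset.mem_Icc.mpr ⟨hi.1, by omega⟩)).1)
      rwa [Nat.card_Ioc, nsmul_eq_mul, Nat.sub_zero] at this
    rw [Finset.sum_sub_distrib, hshift]
    linarith
  -- Step B: AM-HM per gap
  have stepB : ∀ k ∈ Finset.Icc 1 q,
      (q:ℝ)^2 / ((k:ℝ) * L) ≤ ∑ r ∈ Finset.Ioc k (2*q), (s r - s (r - k))⁻¹ := by
    intro k hk
    rw [Finset.mem_Icc] at hk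
    have hxpos : ∀ r ∈ Finset.Ioc k (2*q), 0 < s r - s (r - k) := by
      intro r hr; rw [Finset.mem_Ioc] at hr
      exact hpos (r - k) r (by omega) (by omega) hr.2
    have hcs := card_sq_le_sum_mul_sum_inv (Finset.Ioc k (2*q)) (fun r => s r - s (r - k)) hxpos
    have hcard : ((Finset.Ioc k (2*q)).card : ℝ) = ((2*q - k : ℕ) : ℝ) := by
      rw [Nat.card_Ioc]
    have hinvnn : (0:ℝ) ≤ ∑ r ∈ Finset.Ioc k (2*q), (s r - s (r - k))⁻¹ :=
      Finset.sum_nonneg fun r hr => (inv_pos.mpr (hxpos r hr)).le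
    have hqle : (q:ℝ) ≤ ((2*q - k : ℕ) : ℝ) := by
      exact_mod_cast Nat.le_sub_of_add_le (by omega)
    have hkL : (0:ℝ) < (k:ℝ) * L := by
      have : (0:ℝ) < (k:ℝ) := by exact_mod_cast hk.1
      positivity
    have key : (q:ℝ)^2 ≤ ((k:ℝ) * L) * ∑ r ∈ Finset.Ioc k (2*q), (s r - s (r - k))⁻¹ := by
      have h1 : (q:ℝ)^2 ≤ ((Finset.Ioc k (2*q)).card : ℝ)^2 := by
        rw [hcard]; exact pow_le_pow_left₀ hq0.le hqle 2
      have h2 : (∑ r ∈ Finset.Ioc k (2*q), (s r - s (r - k)))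
          * ∑ r ∈ Finset.Ioc k (2*q), (s r - s (r - k))⁻¹
          ≤ ((k:ℝ) * L) * ∑ r ∈ Finset.Ioc k (2*q), (s r - s (r - k))⁻¹ :=
        mul_le_mul_of_nonneg_right (stepA k (Finset.mem_Icc.mpr hk)) hinvnn
      linarith
    rw [div_le_iff₀ hkL]
    linarith [key]
  -- Step C: harmonic bound
  have stepC : (q:ℝ)^2 / L * Real.log q ≤ ∑ k ∈ Finset.Icc 1 q, (q:ℝ)^2 / ((k:ℝ) * L) := by
    have hlog : Real.log q ≤ ∑ k ∈ Finset.Icc 1 q, ((k:ℝ))⁻¹ := by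
      have h1 := log_add_one_le_harmonic q
      have h2 : Real.log q ≤ Real.log (↑(q+1)) := by
        apply Real.log_le_log hq0
        push_cast; linarith
      have h3 : ((harmonic q : ℚ) : ℝ) = ∑ k ∈ Finset.Icc 1 q, ((k:ℝ))⁻¹ := by
        rw [harmonic_eq_sum_Icc]; push_cast; ring_nf
      linarith [h3 ▸ h1, h2]
    have hsum : ∑ k ∈ Finset.Icc 1 q, (q:ℝ)^2 / ((k:ℝ) * L)
        = (q:ℝ)^2 / L * ∑ k ∈ Finset.Icc 1 q, ((k:ℝ))⁻¹ := by
      rw [Finset.mul_sum]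
      refine Finset.sum_congr rfl fun k hk => ?_
      rw [Finset.mem_Icc] at hk
      have hk0 : (k:ℝ) ≠ 0 := Nat.cast_ne_zero.mpr (by omega)
      field_simp
    rw [hsum]
    apply mul_le_mul_of_nonneg_left hlog (by positivity)
  -- Step D: double sum rearrangement
  set t : (Σ _ : ℕ, ℕ) → ℝ := fun p => (s p.1 - s p.2)⁻¹ with ht
  have stepD : ∑ k ∈ Finset.Icc 1 q, ∑ r ∈ Finset.Ioc k (2*q), (s r - s (r - k))⁻¹
      ≤ ∑ r ∈ Finset.Ioc 1 (2*q), ∑ i ∈ Finset.Icc 1 (r - 1), (s r - s i)⁻¹ := by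
    set A : Finset (Σ _ : ℕ, ℕ) := (Finset.Icc 1 q).sigma (fun k => Finset.Ioc k (2*q)) with hA
    set B : Finset (Σ _ : ℕ, ℕ) := (Finset.Ioc 1 (2*q)).sigma (fun r => Finset.Icc 1 (r - 1))
      with hB
    set e : (Σ _ : ℕ, ℕ) → (Σ _ : ℕ, ℕ) := fun p => ⟨p.2, p.2 - p.1⟩ with he
    have hmemA : ∀ p ∈ A, 1 ≤ p.1 ∧ p.1 ≤ q ∧ p.1 < p.2 ∧ p.2 ≤ 2*q := by
      intro p hp
      rw [hA, Finset.mem_sigma, Finset.mem_Icc, Finset.mem_Ioc] at hp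
      exact ⟨hp.1.1, hp.1.2, hp.2.1, hp.2.2⟩
    have hinj : Set.InjOn e A := by
      rintro ⟨k, r⟩ hp ⟨k', r'⟩ hp' hee
      simp only [hA, Finset.coe_sigma, Set.mem_sigma_iff, Finset.mem_coe, Finset.mem_sigma,
        Finset.mem_Icc, Finset.mem_Ioc] at hp hp'
      simp only [he] at hee
      injection hee with e1 e2
      subst e1
      have e2' : r - k = r - k' := e2
      have : k = k' := by omega
      subst this; rfl
    have himg : A.image e ⊆ B := by
      intro p hp
      rw [Finset.mem_image] at hp
      obtain ⟨⟨k, r⟩, hp', rfl⟩ := hp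
      simp only [hA, Finset.mem_sigma, Finset.mem_Icc, Finset.mem_Ioc] at hp'
      simp only [hB, he, Finset.mem_sigma, Finset.mem_Icc, Finset.mem_Ioc]
      omega
    have hnn : ∀ p ∈ B, 0 ≤ t p := by
      intro p hp
      rw [hB, Finset.mem_sigma, Finset.mem_Ioc, Finset.mem_Icc] at hp
      exact (inv_pos.mpr (hpos p.2 p.1 hp.2.1 (by omega) hp.1.2)).le
    calc ∑ k ∈ Finset.Icc 1 q, ∑ r ∈ Finset.Ioc k (2*q), (s r - s (r - k))⁻¹
        = ∑ p ∈ A, t (e p) := by rw [Finset.sum_sigma']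
      _ = ∑ p ∈ A.image e, t p := (Finset.sum_image (fun x hx y hy h => hinj (Finset.mem_coe.mpr hx) (Finset.mem_coe.mpr hy) h)).symm
      _ ≤ ∑ p ∈ B, t p := Finset.sum_le_sum_of_subset_of_nonneg himg
          (fun p hp _ => hnn p hp)
      _ = ∑ r ∈ Finset.Ioc 1 (2*q), ∑ i ∈ Finset.Icc 1 (r - 1), (s r - s i)⁻¹ := by
          rw [Finset.sum_sigma']
  -- Step E: pigeonhole
  have htotal : (q:ℝ)^2 / L * Real.log q
      ≤ ∑ r ∈ Finset.Ioc 1 (2*q), ∑ i ∈ Finset.Icc 1 (r - 1), (s r - s i)⁻¹ :=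
    le_trans (le_trans stepC (Finset.sum_le_sum stepB)) stepD
  have hne : (Finset.Ioc 1 (2*q)).Nonempty := ⟨2, Finset.mem_Ioc.mpr ⟨one_lt_two, by omega⟩⟩
  have hconst : ∑ _r ∈ Finset.Ioc 1 (2*q), (1/2 * ((q:ℝ) / L) * Real.log q)
      ≤ ∑ r ∈ Finset.Ioc 1 (2*q), ∑ i ∈ Finset.Icc 1 (r - 1), (s r - s i)⁻¹ := by
    rw [Finset.sum_const, Nat.card_Ioc, nsmul_eq_mul]
    have hcard : ((2*q - 1 : ℕ) : ℝ) ≤ 2 * (q:ℝ) := by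
      push_cast [Nat.cast_sub (by omega : 1 ≤ 2*q)]; linarith
    have hlognn : 0 ≤ Real.log q := Real.log_nonneg (by exact_mod_cast hq)
    have hL0 : L ≠ 0 := ne_of_gt hL
    have h1 : ((2*q - 1 : ℕ) : ℝ) * (1/2 * ((q:ℝ) / L) * Real.log q)
        ≤ (q:ℝ)^2 / L * Real.log q := by
      have hqL : 0 ≤ (q:ℝ) / L := by positivity
      have hX : 0 ≤ 1/2 * ((q:ℝ)/L) * Real.log q :=
        mul_nonneg (mul_nonneg (by norm_num) hqL) hlognn
      have h2 := mul_le_mul_of_nonneg_right hcard hX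
      have h3 : 2*(q:ℝ) * (1/2 * ((q:ℝ)/L) * Real.log q) = (q:ℝ)^2 / L * Real.log q := by
        field_simp
      linarith
    linarith
  obtain ⟨r, hr, hler⟩ := Finset.exists_le_of_sum_le hne hconst
  rw [Finset.mem_Ioc] at hr
  refine ⟨r, hr.1, hr.2, ?_⟩
  simpa [one_div] using hler
end

section
/- Let s_1 < s_2 < … < s_{2q} be real numbers contained in an interval of length L > 0, with q ≥ 1. Then (1/q) · Σ_{r=q+1}^{2q} Σ_{j=1}^{q} 1/(s_r − s_{r−j}) ≥ (q/L) · Σ_{j=1}^{q} 1/j. -/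
/-- Double-sum bound from the proof of Lemma 1: if `s 1 < … < s (2q)` lie in an interval of
length `L > 0`, then `(1/q) ∑_{r=q+1}^{2q} ∑_{j=1}^{q} 1/(s r - s (r-j)) ≥ (q/L) ∑_{j=1}^{q} 1/j`. -/
theorem haar_critical_stmt2
    (q : ℕ) (hq : 1 ≤ q) (L : ℝ) (hL : 0 < L) (s : ℕ → ℝ)
    (hmono : ∀ i ∈ Finset.Icc 1 (2 * q), ∀ i' ∈ Finset.Icc 1 (2 * q), i < i' → s i < s i')
    (hT : ∃ a : ℝ, ∀ i ∈ Finset.Icc 1 (2 * q), s i ∈ Set.Icc a (a + L)) :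
    ((q : ℝ) / L) * ∑ j ∈ Finset.Icc 1 q, (1 : ℝ) / (j : ℝ) ≤
      (1 / (q : ℝ)) * ∑ r ∈ Finset.Icc (q + 1) (2 * q),
        ∑ j ∈ Finset.Icc 1 q, 1 / (s r - s (r - j)) := by
  obtain ⟨a, ha⟩ := hT
  have hq0 : (0 : ℝ) < (q : ℝ) := by exact_mod_cast hq
  -- key bound for each j
  have key : ∀ j ∈ Finset.Icc 1 q,
      (q : ℝ) * q / ((j : ℝ) * L) ≤
        ∑ r ∈ Finset.Icc (q + 1) (2 * q), 1 / (s r - s (r - j)) := by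
    intro j hj
    obtain ⟨hj1, hjq⟩ := Finset.mem_Icc.mp hj
    have hdpos : ∀ r ∈ Finset.Icc (q + 1) (2 * q), 0 < s r - s (r - j) := by
      intro r hr
      obtain ⟨hr1, hr2⟩ := Finset.mem_Icc.mp hr
      have h1 : r - j ∈ Finset.Icc 1 (2 * q) := by
        rw [Finset.mem_Icc]; omega
      have h2 : r ∈ Finset.Icc 1 (2 * q) := by
        rw [Finset.mem_Icc]; omega
      have := hmono _ h1 _ h2 (by omega)
      linarith
    -- telescoping sum bound
    have hsumd : ∑ r ∈ Finset.Icc (q + 1) (2 * q), (s r - s (r - j)) ≤ (j : ℝ) * L := by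
      have hIcc : Finset.Icc (q + 1) (2 * q) = Finset.Ioc q (2 * q) :=
        Finset.Icc_add_one_left_eq_Ioc q (2 * q)
      have hshift : ∑ r ∈ Finset.Ioc q (2 * q), s (r - j)
          = ∑ r ∈ Finset.Ioc (q - j) (2 * q - j), s r := by
        refine Finset.sum_nbij' (fun r => r - j) (fun r => r + j) ?_ ?_ ?_ ?_ ?_ <;>
          intros x hx <;> simp only [Finset.mem_Ioc] at * <;>
          first
          | omega
          | (congr 1; omega)
      have hsplit1 : ∑ r ∈ Finset.Ioc (q - j) (2 * q - j), s r
            + ∑ r ∈ Finset.Ioc (2 * q - j) (2 * q), s r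
          = ∑ r ∈ Finset.Ioc (q - j) (2 * q), s r :=
        Finset.sum_Ioc_consecutive s (by omega) (by omega)
      have hsplit2 : ∑ r ∈ Finset.Ioc (q - j) q, s r
            + ∑ r ∈ Finset.Ioc q (2 * q), s r
          = ∑ r ∈ Finset.Ioc (q - j) (2 * q), s r :=
        Finset.sum_Ioc_consecutive s (by omega) (by omega)
      have htop : ∑ r ∈ Finset.Ioc (2 * q - j) (2 * q), s r ≤ (j : ℝ) * (a + L) := by
        have hcard : (Finset.Ioc (2 * q - j) (2 * q)).card = j := by
          rw [Nat.card_Ioc]; omega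
        calc ∑ r ∈ Finset.Ioc (2 * q - j) (2 * q), s r
            ≤ ∑ _r ∈ Finset.Ioc (2 * q - j) (2 * q), (a + L) := by
              apply Finset.sum_le_sum
              intro i hi
              rw [Finset.mem_Ioc] at hi
              exact (ha i (Finset.mem_Icc.mpr ⟨by omega, hi.2⟩)).2
          _ = (j : ℝ) * (a + L) := by rw [Finset.sum_const, hcard, nsmul_eq_mul]
      have hbot : (j : ℝ) * a ≤ ∑ r ∈ Finset.Ioc (q - j) q, s r := by
        have hcard : (Finset.Ioc (q - j) q).card = j := by
          rw [Nat.card_Ioc]; omega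
        calc (j : ℝ) * a = ∑ _r ∈ Finset.Ioc (q - j) q, a := by
              rw [Finset.sum_const, hcard, nsmul_eq_mul]
          _ ≤ ∑ r ∈ Finset.Ioc (q - j) q, s r := by
              apply Finset.sum_le_sum
              intro i hi
              rw [Finset.mem_Ioc] at hi
              exact (ha i (Finset.mem_Icc.mpr ⟨by omega, by omega⟩)).1
      rw [hIcc, Finset.sum_sub_distrib, hshift]
      have : ∑ r ∈ Finset.Ioc q (2 * q), s r - ∑ r ∈ Finset.Ioc (q - j) (2 * q - j), s r
          = ∑ r ∈ Finset.Ioc (2 * q - j) (2 * q), s r - ∑ r ∈ Finset.Ioc (q - j) q, s r := by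
        linarith
      rw [this]
      linarith
    -- Sedrakyan / Cauchy-Schwarz
    have hsed := Finset.sq_sum_div_le_sum_sq_div (Finset.Icc (q + 1) (2 * q))
      (fun _ => (1 : ℝ)) hdpos
    have hcard : (Finset.Icc (q + 1) (2 * q)).card = q := by
      rw [Nat.card_Icc]; omega
    simp only [Finset.sum_const, hcard, nsmul_eq_mul, mul_one, one_pow] at hsed
    have hsumpos : 0 < ∑ r ∈ Finset.Icc (q + 1) (2 * q), (s r - s (r - j)) := by
      apply Finset.sum_pos hdpos
      rw [← Finset.card_pos, hcard]; omega
    have hj0 : (0 : ℝ) < (j : ℝ) := by exact_mod_cast hj1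
    calc (q : ℝ) * q / ((j : ℝ) * L)
        ≤ ((q : ℝ)) ^ 2 / ∑ r ∈ Finset.Icc (q + 1) (2 * q), (s r - s (r - j)) := by
          rw [sq]
          apply div_le_div_of_nonneg_left (by positivity) hsumpos hsumd
      _ ≤ ∑ r ∈ Finset.Icc (q + 1) (2 * q), 1 / (s r - s (r - j)) := by
          exact hsed
  -- combine
  rw [Finset.sum_comm]
  rw [Finset.mul_sum, Finset.mul_sum]
  apply Finset.sum_le_sum
  intro j hj
  obtain ⟨hj1, hjq⟩ := Finset.mem_Icc.mp hj
  have hj0 : (0 : ℝ) < (j : ℝ) := by exact_mod_cast hj1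
  have := key j hj
  calc (q : ℝ) / L * (1 / (j : ℝ)) = (1 / (q : ℝ)) * ((q : ℝ) * q / ((j : ℝ) * L)) := by
        have hqne : (q:ℝ) ≠ 0 := ne_of_gt hq0
        have hjne : (j:ℝ) ≠ 0 := ne_of_gt hj0
        have hLne : L ≠ 0 := ne_of_gt hL
        rw [div_mul_div_comm, one_div_mul_eq_div, div_div,
          div_eq_div_iff (by positivity) (by positivity)]
        ring
    _ ≤ (1 / (q : ℝ)) * ∑ r ∈ Finset.Icc (q + 1) (2 * q), 1 / (s r - s (r - j)) := by
        apply mul_le_mul_of_nonneg_left this (by positivity)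
end

section
/- For every integer j ≥ 0, every integer k with 0 ≤ k ≤ 2^j − 1, and every t ∈ [0,1], one has (R_{3/2} h_{j,k})(t) = H(2^{j+1} t − 2k) / (2^{3/2+j} · Γ(5/2)). -/
open MeasureTheory Set

/-- The Riemann–Liouville integration operator of order `α`. -/
noncomputable def RL (α : ℝ) (h : ℝ → ℝ) (t : ℝ) : ℝ :=
  (1 / Real.Gamma α) * ∫ u in (0 : ℝ)..t, (t - u) ^ (α - 1) * h u

/-- The Haar function `h_{j,k}`. -/
noncomputable def haar (j k : ℕ) (t : ℝ) : ℝ :=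
  2 ^ ((j : ℝ) / 2) *
    ((Set.Ico ((2 * k : ℝ) / 2 ^ (j + 1)) ((2 * k + 1 : ℝ) / 2 ^ (j + 1))).indicator
        (fun _ => (1 : ℝ)) t -
      (Set.Ico ((2 * k + 1 : ℝ) / 2 ^ (j + 1)) ((2 * k + 2 : ℝ) / 2 ^ (j + 1))).indicator
        (fun _ => (1 : ℝ)) t)

/-- The unscaled integrated Haar function. -/
noncomputable def H (t : ℝ) : ℝ :=
  (max (t - 2) 0) ^ ((3 : ℝ) / 2) - 2 * (max (t - 1) 0) ^ ((3 : ℝ) / 2)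
    + (max t 0) ^ ((3 : ℝ) / 2)

/- ### Auxiliary lemmas -/

lemma rpow_half_nonpos {s : ℝ} (hs : s ≤ 0) : s ^ ((1:ℝ)/2) = 0 := by
  rcases hs.lt_or_eq with h | h
  · rw [Real.rpow_def_of_neg h]
    have : (1/2:ℝ) * Real.pi = Real.pi / 2 := by ring
    rw [this, Real.cos_pi_div_two, mul_zero]
  · rw [h, Real.zero_rpow (by norm_num)]

lemma rpow_th_nonpos {s : ℝ} (hs : s ≤ 0) : s ^ ((3:ℝ)/2) = 0 := by
  rcases hs.lt_or_eq with h | h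
  · rw [Real.rpow_def_of_neg h]
    have h2 : (3/2:ℝ) * Real.pi = Real.pi/2 + Real.pi := by ring
    rw [h2, Real.cos_add_pi, Real.cos_pi_div_two, neg_zero, mul_zero]
  · rw [h, Real.zero_rpow (by norm_num)]

lemma max_rpow_th (s : ℝ) : (max s 0) ^ ((3:ℝ)/2) = s ^ ((3:ℝ)/2) := by
  rcases le_total s 0 with h | h
  · rw [max_eq_right h, rpow_th_nonpos h, rpow_th_nonpos le_rfl]
  · rw [max_eq_left h]

lemma scale_rpow_th {A : ℝ} (hA : 0 ≤ A) (s : ℝ) :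
    (A * s) ^ ((3:ℝ)/2) = A ^ ((3:ℝ)/2) * s ^ ((3:ℝ)/2) := by
  rcases le_or_gt s 0 with h | h
  · rw [rpow_th_nonpos (mul_nonpos_of_nonneg_of_nonpos hA h), rpow_th_nonpos h, mul_zero]
  · exact Real.mul_rpow hA h.le

lemma cont_half (t : ℝ) : Continuous (fun u : ℝ => (t - u) ^ ((1:ℝ)/2)) := by
  rw [continuous_iff_continuousAt]
  intro u
  exact (Real.continuousAt_rpow_const _ _ (Or.inr (by norm_num))).comp
    ((continuous_const.sub continuous_id).continuousAt)

/-- Fundamental theorem of calculus computation. -/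
lemma ftc_half (t x y : ℝ) :
    ∫ u in x..y, (t - u) ^ ((1:ℝ)/2)
      = (2/3) * ((t - x) ^ ((3:ℝ)/2) - (t - y) ^ ((3:ℝ)/2)) := by
  have hder : ∀ u ∈ uIcc x y,
      HasDerivAt (fun u => -(2/3) * (t - u) ^ ((3:ℝ)/2)) ((t - u) ^ ((1:ℝ)/2)) u := by
    intro u _
    have h1 : HasDerivAt (fun u : ℝ => t - u) (-1) u := (hasDerivAt_id u).const_sub t
    have h2 : HasDerivAt (fun s : ℝ => s ^ ((3:ℝ)/2))
        ((3/2) * (t - u) ^ ((3:ℝ)/2 - 1)) (t - u) :=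
      Real.hasDerivAt_rpow_const (Or.inr (by norm_num))
    have h3 := (h2.comp u h1).const_mul (-(2/3) : ℝ)
    refine HasDerivAt.congr_deriv h3 ?_
    have : (3:ℝ)/2 - 1 = (1:ℝ)/2 := by norm_num
    rw [this]; ring
  rw [intervalIntegral.integral_eq_sub_of_hasDerivAt hder ((cont_half t).intervalIntegrable x y)]
  ring

/-- Interval integrability of the integrand times an indicator. -/
lemma II {S : Set ℝ} (hS : MeasurableSet S) (t a b : ℝ) :
    IntervalIntegrable (fun u => (t - u) ^ ((1:ℝ)/2) * S.indicator (fun _ => (1:ℝ)) u)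
      volume a b := by
  have heq : (fun u => (t - u) ^ ((1:ℝ)/2) * S.indicator (fun _ => (1:ℝ)) u)
      = S.indicator (fun u => (t - u) ^ ((1:ℝ)/2)) := by
    funext u
    by_cases h : u ∈ S <;> simp [h]
  rw [heq, intervalIntegrable_iff]
  exact (intervalIntegrable_iff.1 ((cont_half t).intervalIntegrable a b)).indicator hS

/-- Value of the integral against a half-line indicator. -/
lemma Jlem (t x : ℝ) (hx : 0 ≤ x) (ht : 0 ≤ t) :
    ∫ u in (0:ℝ)..t, (t - u) ^ ((1:ℝ)/2) * (Iio x).indicator (fun _ => (1:ℝ)) u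
      = (2/3) * (t ^ ((3:ℝ)/2) - (t - x) ^ ((3:ℝ)/2)) := by
  have hae : ∀ᵐ (u : ℝ), u ≠ x := by
    rw [ae_iff]
    simp only [ne_eq, not_not, Set.setOf_eq_eq_singleton]
    exact measure_singleton x
  rcases le_total t x with h | h
  · -- the indicator is 1 on all of [0,t] except possibly at u = t = x where f = 0
    have heq : EqOn (fun u => (t - u) ^ ((1:ℝ)/2) * (Iio x).indicator (fun _ => (1:ℝ)) u)
        (fun u => (t - u) ^ ((1:ℝ)/2)) (uIcc 0 t) := by
      intro u hu
      rw [uIcc_of_le ht] at hu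
      by_cases hux : u < x
      · simp [hux]
      · have htu : t ≤ u := le_trans h (not_lt.1 hux)
        have hut : u = t := le_antisymm hu.2 htu
        simp [hux, hut, rpow_half_nonpos (le_of_eq (sub_self t))]
    rw [intervalIntegral.integral_congr heq, ftc_half]
    rw [rpow_th_nonpos (by linarith : t - x ≤ 0), rpow_th_nonpos (le_of_eq (sub_self t))]
    ring_nf
  · -- x ≤ t : split at x
    have h1 : IntervalIntegrable
        (fun u => (t - u) ^ ((1:ℝ)/2) * (Iio x).indicator (fun _ => (1:ℝ)) u) volume 0 x :=
      II measurableSet_Iio t 0 x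
    have h2 : IntervalIntegrable
        (fun u => (t - u) ^ ((1:ℝ)/2) * (Iio x).indicator (fun _ => (1:ℝ)) u) volume x t :=
      II measurableSet_Iio t x t
    rw [← intervalIntegral.integral_add_adjacent_intervals h1 h2]
    have hz : EqOn (fun u => (t - u) ^ ((1:ℝ)/2) * (Iio x).indicator (fun _ => (1:ℝ)) u)
        (fun _ => (0:ℝ)) (uIcc x t) := by
      intro u hu
      rw [uIcc_of_le h] at hu
      have : ¬ u < x := not_lt.2 hu.1
      simp [this]
    rw [intervalIntegral.integral_congr hz]
    have hfst : ∫ u in (0:ℝ)..x, (t - u) ^ ((1:ℝ)/2) * (Iio x).indicator (fun _ => (1:ℝ)) u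
        = ∫ u in (0:ℝ)..x, (t - u) ^ ((1:ℝ)/2) := by
      apply intervalIntegral.integral_congr_ae
      filter_upwards [hae] with u hu hu_mem
      have hux : u < x := by
        rcases Set.mem_uIoc.1 hu_mem with h' | h'
        · exact lt_of_le_of_ne h'.2 hu
        · linarith [h'.1, h'.2]
      simp [hux]
    rw [hfst, ftc_half]
    simp only [sub_zero, intervalIntegral.integral_zero]
    ring

/-- Value of the integral against an `Ico` indicator. -/
lemma Klem (t x y : ℝ) (hx : 0 ≤ x) (hxy : x ≤ y) (ht : 0 ≤ t) :
    ∫ u in (0:ℝ)..t, (t - u) ^ ((1:ℝ)/2) * (Ico x y).indicator (fun _ => (1:ℝ)) u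
      = (2/3) * ((t - x) ^ ((3:ℝ)/2) - (t - y) ^ ((3:ℝ)/2)) := by
  have hpt : ∀ u, (t - u) ^ ((1:ℝ)/2) * (Ico x y).indicator (fun _ => (1:ℝ)) u
      = (t - u) ^ ((1:ℝ)/2) * (Iio y).indicator (fun _ => (1:ℝ)) u
        - (t - u) ^ ((1:ℝ)/2) * (Iio x).indicator (fun _ => (1:ℝ)) u := by
    intro u
    by_cases h2 : u < y
    · by_cases h1 : u < x
      · have : ¬ (x ≤ u ∧ u < y) := fun hc => absurd hc.1 (not_le.2 h1)
        simp [h1, h2, Set.indicator_apply, Set.mem_Ico, this]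
      · have : x ≤ u ∧ u < y := ⟨not_lt.1 h1, h2⟩
        simp [h1, h2, Set.indicator_apply, Set.mem_Ico, this]
    · have h1 : ¬ u < x := fun hc => h2 (lt_of_lt_of_le hc hxy)
      have : ¬ (x ≤ u ∧ u < y) := fun hc => absurd hc.2 h2
      simp [h1, h2, Set.indicator_apply, Set.mem_Ico, this]
  rw [intervalIntegral.integral_congr (g := fun u =>
      (t - u) ^ ((1:ℝ)/2) * (Iio y).indicator (fun _ => (1:ℝ)) u
        - (t - u) ^ ((1:ℝ)/2) * (Iio x).indicator (fun _ => (1:ℝ)) u)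
      (fun u _ => hpt u)]
  rw [intervalIntegral.integral_sub (II measurableSet_Iio t 0 t) (II measurableSet_Iio t 0 t),
    Jlem t y (le_trans hx hxy) ht, Jlem t x hx ht]
  ring

/-- Scaling relation: for `0 ≤ k ≤ 2^j - 1` and `t ∈ [0,1]`,
`(R_{3/2} h_{j,k})(t) = H(2^{j+1} t - 2k) / (2^{3/2+j} Γ(5/2))`. -/
theorem haar_critical_stmt7
    (j k : ℕ) (hk : k ≤ 2 ^ j - 1) (t : ℝ) (ht : t ∈ Set.Icc (0 : ℝ) 1) :
    RL (3 / 2) (haar j k) t =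
      H (2 ^ (j + 1) * t - 2 * k) / (2 ^ ((3 : ℝ) / 2 + (j : ℝ)) * Real.Gamma (5 / 2)) := by
  obtain ⟨ht0, ht1⟩ := ht
  have hN : (0:ℝ) < 2 ^ (j + 1) := by positivity
  have ha : (0:ℝ) ≤ (2 * k : ℝ) / 2 ^ (j + 1) := by positivity
  have hb : (0:ℝ) ≤ (2 * k + 1 : ℝ) / 2 ^ (j + 1) := by positivity
  have hab : (2 * k : ℝ) / 2 ^ (j + 1) ≤ (2 * k + 1 : ℝ) / 2 ^ (j + 1) :=
    (div_le_div_iff_of_pos_right hN).2 (by linarith)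
  have hbc : (2 * k + 1 : ℝ) / 2 ^ (j + 1) ≤ (2 * k + 2 : ℝ) / 2 ^ (j + 1) :=
    (div_le_div_iff_of_pos_right hN).2 (by linarith)
  have e1 : (3:ℝ)/2 - 1 = (1:ℝ)/2 := by norm_num
  simp only [RL]
  have hint : EqOn (fun u : ℝ => (t - u) ^ ((3:ℝ)/2 - 1) * haar j k u)
      (fun u : ℝ =>
        2 ^ ((j:ℝ)/2) * ((t - u) ^ ((1:ℝ)/2) *
          (Ico ((2 * k : ℝ) / 2 ^ (j + 1)) ((2 * k + 1 : ℝ) / 2 ^ (j + 1))).indicator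
            (fun _ => (1:ℝ)) u)
        - 2 ^ ((j:ℝ)/2) * ((t - u) ^ ((1:ℝ)/2) *
          (Ico ((2 * k + 1 : ℝ) / 2 ^ (j + 1)) ((2 * k + 2 : ℝ) / 2 ^ (j + 1))).indicator
            (fun _ => (1:ℝ)) u)) (uIcc 0 t) := by
    intro u _
    simp only [haar, e1]
    ring
  rw [intervalIntegral.integral_congr hint,
    intervalIntegral.integral_sub ((II measurableSet_Ico t 0 t).const_mul _)
      ((II measurableSet_Ico t 0 t).const_mul _),
    intervalIntegral.integral_const_mul, intervalIntegral.integral_const_mul,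
    Klem t _ _ ha hab ht0, Klem t _ _ hb hbc ht0]
  have hH : H ((2:ℝ) ^ (j + 1) * t - 2 * k)
      = ((2:ℝ) ^ (j + 1)) ^ ((3:ℝ)/2) *
          ((t - (2 * k + 2 : ℝ) / 2 ^ (j + 1)) ^ ((3:ℝ)/2)
            - 2 * (t - (2 * k + 1 : ℝ) / 2 ^ (j + 1)) ^ ((3:ℝ)/2)
            + (t - (2 * k : ℝ) / 2 ^ (j + 1)) ^ ((3:ℝ)/2)) := by
    have e_c : (2:ℝ) ^ (j + 1) * t - 2 * k - 2
        = (2:ℝ) ^ (j + 1) * (t - (2 * k + 2 : ℝ) / 2 ^ (j + 1)) := by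
      field_simp
      ring
    have e_b : (2:ℝ) ^ (j + 1) * t - 2 * k - 1
        = (2:ℝ) ^ (j + 1) * (t - (2 * k + 1 : ℝ) / 2 ^ (j + 1)) := by
      field_simp
      ring
    have e_a : (2:ℝ) ^ (j + 1) * t - 2 * k
        = (2:ℝ) ^ (j + 1) * (t - (2 * k : ℝ) / 2 ^ (j + 1)) := by
      field_simp
    simp only [H, max_rpow_th]
    rw [e_c, e_b, e_a, scale_rpow_th hN.le, scale_rpow_th hN.le, scale_rpow_th hN.le]
    ring
  have hpow : ((2:ℝ) ^ (j + 1)) ^ ((3:ℝ)/2)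
      = 2 ^ ((3:ℝ)/2 + (j:ℝ)) * 2 ^ ((j:ℝ)/2) := by
    rw [← Real.rpow_natCast 2 (j + 1), ← Real.rpow_mul (by norm_num),
      ← Real.rpow_add two_pos]
    congr 1
    push_cast
    ring
  have hG : Real.Gamma (5/2) = (3/2) * Real.Gamma (3/2) := by
    have h52 : (5:ℝ)/2 = 3/2 + 1 := by norm_num
    rw [h52, Real.Gamma_add_one (by norm_num)]
  have hG3 : Real.Gamma (3/2) ≠ 0 := (Real.Gamma_pos_of_pos (by norm_num)).ne'
  have hp2 : (0:ℝ) < 2 ^ ((3:ℝ)/2 + (j:ℝ)) := Real.rpow_pos_of_pos two_pos _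
  rw [hH, hpow, hG]
  field_simp
  ring
end

section
/- There exist a constant c > 0 and an integer N_0 such that for every integer N ≥ N_0 and every finite set S of integers contained in an interval of length N with #S ≥ N/4, there exists a point v ∈ S such that Σ_{s∈S, s<v} 1/(v − s) ≥ c · ln N. -/
open Finset

lemma telescope_Icc (f : ℕ → ℝ) (a N : ℕ) (h : a ≤ N) :
    ∑ k ∈ Finset.Icc a N, (f (k+1) - f k) = f (N+1) - f a := by
  rw [← Finset.Ico_add_one_right_eq_Icc, Finset.sum_Ico_eq_sum_range]
  have : ∀ i, f (a + i + 1) - f (a + i) = (fun j => f (a + j)) (i+1) - (fun j => f (a+j)) i := by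
    intro i; simp [Nat.add_assoc]
  calc ∑ i ∈ Finset.range (N + 1 - a), (f (a + i + 1) - f (a + i))
      = ∑ i ∈ Finset.range (N + 1 - a), ((fun j => f (a+j)) (i+1) - (fun j => f (a+j)) i) := by
        exact Finset.sum_congr rfl fun i _ => this i
    _ = f (a + (N + 1 - a)) - f (a + 0) := Finset.sum_range_sub (fun j => f (a+j)) _
    _ = f (N+1) - f a := by rw [Nat.add_sub_cancel' (by omega)]; simp

lemma pairs_count (F : Finset ℤ) :
    F.card * F.card = 2 * (((F ×ˢ F).filter (fun p => p.2 < p.1)).card) + F.card := by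
  classical
  have h1 := Finset.card_filter_add_card_filter_not
    (s := F ×ˢ F) (p := fun p : ℤ × ℤ => p.2 < p.1)
  have h2 := Finset.card_filter_add_card_filter_not
    (s := (F ×ˢ F).filter (fun p : ℤ × ℤ => ¬ p.2 < p.1)) (p := fun p : ℤ × ℤ => p.1 < p.2)
  have e1 : ((F ×ˢ F).filter (fun p : ℤ × ℤ => ¬ p.2 < p.1)).filter
      (fun p : ℤ × ℤ => p.1 < p.2) = (F ×ˢ F).filter (fun p : ℤ × ℤ => p.1 < p.2) := by
    rw [Finset.filter_filter]
    apply Finset.filter_congr; intro p _; constructor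
    · rintro ⟨_, h⟩; exact h
    · intro h; exact ⟨by omega, h⟩
  have e2 : ((F ×ˢ F).filter (fun p : ℤ × ℤ => ¬ p.2 < p.1)).filter
      (fun p : ℤ × ℤ => ¬ p.1 < p.2) = (F ×ˢ F).filter (fun p : ℤ × ℤ => p.1 = p.2) := by
    rw [Finset.filter_filter]
    apply Finset.filter_congr; intro p _; constructor
    · rintro ⟨h, h'⟩; omega
    · intro h; omega
  have e3 : ((F ×ˢ F).filter (fun p : ℤ × ℤ => p.1 < p.2)).card
      = ((F ×ˢ F).filter (fun p : ℤ × ℤ => p.2 < p.1)).card := by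
    apply Finset.card_nbij' (fun p => p.swap) (fun p => p.swap) <;>
      simp [Finset.mem_filter, Finset.mem_product, Set.MapsTo] <;> tauto
  have e4 : ((F ×ˢ F).filter (fun p : ℤ × ℤ => p.1 = p.2)).card = F.card := by
    apply Finset.card_nbij' (fun p => p.1) (fun a => (a, a))
    · intro p hp; simp only [Finset.mem_coe, Finset.mem_filter, Finset.mem_product] at hp; exact hp.1.1
    · intro a ha; simp [Finset.mem_filter, Finset.mem_coe.mp ha]
    · intro p hp; simp only [Finset.mem_coe, Finset.mem_filter, Finset.mem_product] at hp
      obtain ⟨_, h⟩ := hp; exact Prod.ext rfl h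
    · intro a _; rfl
  rw [Finset.card_product] at h1
  rw [e1, e2, e3, e4] at h2
  omega

lemma Rk_bound (N k : ℕ) (S : Finset ℤ) (b : ℤ)
    (hb : ∀ s ∈ S, b ≤ s ∧ s ≤ b + N)
    (hk : 16 ≤ k) (hkN : k ≤ N)
    (hcard : (N:ℝ)/4 ≤ S.card) (hN : 0 < N) :
    (S.card : ℝ) * k / 32 ≤
      ((((S ×ˢ S).filter (fun p => p.2 < p.1)).filter
        (fun p => p.1 - p.2 ≤ (k:ℤ))).card : ℝ) := by
  classical
  have hk0 : 0 < k := by omega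
  set g : ℤ → ℕ := fun s => (s - b).toNat / k with hg
  set B : ℕ := N / k + 1 with hB
  have htoNat : ∀ s ∈ S, (s - b).toNat ≤ N := by
    intro s hs
    have := hb s hs
    omega
  have hgmem : ∀ s ∈ S, g s ∈ Finset.range B := by
    intro s hs
    simp only [Finset.mem_range, hg, hB]
    exact Nat.lt_succ_of_le (Nat.div_le_div_right (htoNat s hs))
  have hm_sum : S.card = ∑ i ∈ Finset.range B, (S.filter (fun s => g s = i)).card :=
    Finset.card_eq_sum_card_fiberwise hgmem
  set Q := (S ×ˢ S).filter (fun p => p.2 < p.1 ∧ g p.1 = g p.2) with hQ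
  -- Q is a subset of near pairs
  have hQsub : Q ⊆ ((S ×ˢ S).filter (fun p => p.2 < p.1)).filter
      (fun p => p.1 - p.2 ≤ (k:ℤ)) := by
    intro p hp
    simp only [hQ, Finset.mem_filter, Finset.mem_product] at hp ⊢
    obtain ⟨⟨h1, h2⟩, h3, h4⟩ := hp
    refine ⟨⟨⟨h1, h2⟩, h3⟩, ?_⟩
    have hb1 := hb p.1 h1
    have hb2 := hb p.2 h2
    simp only [hg] at h4
    have t1 : (p.2 - b).toNat / k * k ≤ (p.2 - b).toNat := Nat.div_mul_le_self _ k
    have t2 : (p.1 - b).toNat % k < k := Nat.mod_lt _ hk0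
    have t3 := Nat.div_add_mod (p.1 - b).toNat k
    rw [h4, mul_comm] at t3
    set u := (p.2 - b).toNat / k * k with hu
    omega
  -- Q.card fiberwise
  have hQcard : Q.card = ∑ i ∈ Finset.range B,
      (((S.filter (fun s => g s = i)) ×ˢ (S.filter (fun s => g s = i))).filter
        (fun p => p.2 < p.1)).card := by
    have hmem : ∀ p ∈ Q, g p.1 ∈ Finset.range B := by
      intro p hp
      simp only [hQ, Finset.mem_filter, Finset.mem_product] at hp
      exact hgmem p.1 hp.1.1
    rw [Finset.card_eq_sum_card_fiberwise hmem]
    apply Finset.sum_congr rfl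
    intro i _
    congr 1
    ext p
    simp only [hQ, Finset.mem_filter, Finset.mem_product]
    constructor
    · rintro ⟨⟨⟨h1, h2⟩, h3, h4⟩, h5⟩
      exact ⟨⟨⟨h1, h5⟩, h2, h4 ▸ h5⟩, h3⟩
    · rintro ⟨⟨⟨h1, h5⟩, h2, h6⟩, h3⟩
      exact ⟨⟨⟨h1, h2⟩, h3, h5.trans h6.symm⟩, h5⟩
  -- Cauchy-Schwarz
  set n : ℕ → ℕ := fun i => (S.filter (fun s => g s = i)).card with hn
  have hcs : ((S.card : ℝ)) ^ 2 ≤ (B : ℝ) * ∑ i ∈ Finset.range B, ((n i : ℝ)) ^ 2 := by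
    have := sq_sum_le_card_mul_sum_sq (s := Finset.range B) (f := fun i => (n i : ℝ))
    rw [Finset.card_range] at this
    calc ((S.card : ℝ)) ^ 2 = (∑ i ∈ Finset.range B, (n i : ℝ)) ^ 2 := by
          rw [hm_sum]; push_cast; rfl
      _ ≤ (B : ℝ) * ∑ i ∈ Finset.range B, ((n i : ℝ)) ^ 2 := this
  have hsq : ∑ i ∈ Finset.range B, ((n i : ℝ)) ^ 2 ≤ 2 * Q.card + S.card := by
    have : ∀ i ∈ Finset.range B, ((n i : ℝ)) ^ 2 =
        2 * ((((S.filter (fun s => g s = i)) ×ˢ (S.filter (fun s => g s = i))).filter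
          (fun p => p.2 < p.1)).card : ℝ) + (n i : ℝ) := by
      intro i _
      have := pairs_count (S.filter (fun s => g s = i))
      have : ((n i : ℝ)) * (n i) = 2 * ((((S.filter (fun s => g s = i)) ×ˢ
          (S.filter (fun s => g s = i))).filter (fun p => p.2 < p.1)).card : ℝ) + (n i : ℝ) := by
        exact_mod_cast congrArg (Nat.cast : ℕ → ℝ) this
      rw [sq]; exact this
    rw [Finset.sum_congr rfl this, Finset.sum_add_distrib, ← Finset.mul_sum]
    have h1 : (∑ i ∈ Finset.range B, ((((S.filter (fun s => g s = i)) ×ˢ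
        (S.filter (fun s => g s = i))).filter (fun p => p.2 < p.1)).card : ℝ)) = (Q.card : ℝ) := by
      rw [hQcard]; push_cast; rfl
    have h2 : (∑ i ∈ Finset.range B, (n i : ℝ)) = (S.card : ℝ) := by
      rw [hm_sum]; push_cast; rfl
    rw [h1, h2]
  have hBk : (B : ℝ) * k ≤ 2 * N := by
    have : B * k ≤ 2 * N := by
      have h1 : N / k * k ≤ N := Nat.div_mul_le_self N k
      calc B * k = N / k * k + k := by rw [hB]; ring
        _ ≤ N + N := by omega
        _ = 2 * N := by ring
    exact_mod_cast this
  -- combine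
  have hQle : (Q.card : ℝ) ≤ ((((S ×ˢ S).filter (fun p => p.2 < p.1)).filter
      (fun p => p.1 - p.2 ≤ (k:ℤ))).card : ℝ) := by
    exact_mod_cast Finset.card_le_card hQsub
  have hm2 : ((S.card : ℝ)) ^ 2 ≤ (B : ℝ) * (2 * Q.card + S.card) := by
    calc ((S.card : ℝ)) ^ 2 ≤ (B : ℝ) * ∑ i ∈ Finset.range B, ((n i : ℝ)) ^ 2 := hcs
      _ ≤ (B : ℝ) * (2 * Q.card + S.card) := by
        apply mul_le_mul_of_nonneg_left hsq (by positivity)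
  -- now pure real arithmetic
  set m : ℝ := (S.card : ℝ) with hmdef
  set q : ℝ := (Q.card : ℝ) with hqdef
  have hq0 : 0 ≤ q := by positivity
  have hm0 : 0 ≤ m := by positivity
  have hkR : (16:ℝ) ≤ k := by exact_mod_cast hk
  have hNR : (0:ℝ) < N := by exact_mod_cast hN
  have hB0 : (0:ℝ) < B := by positivity
  -- k * m^2 ≤ 2N(2q+m)
  have h1 : (k:ℝ) * m ^ 2 ≤ 2 * N * (2 * q + m) := by
    calc (k:ℝ) * m ^ 2 ≤ (k:ℝ) * ((B : ℝ) * (2 * q + m)) := by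
          apply mul_le_mul_of_nonneg_left hm2 (by positivity)
      _ = ((B:ℝ) * k) * (2 * q + m) := by ring
      _ ≤ 2 * N * (2 * q + m) := by
          apply mul_le_mul_of_nonneg_right hBk (by positivity)
  have h2 : (k:ℝ) * m * ((N:ℝ)/4) ≤ (k:ℝ) * m ^ 2 := by
    rw [sq, ← mul_assoc]
    apply mul_le_mul_of_nonneg_left hcard (by positivity)
  -- so k*m*N/4 ≤ 2N(2q+m), divide by N
  have h3 : (k:ℝ) * m / 4 ≤ 2 * (2 * q + m) := by
    have := h2.trans h1
    nlinarith [hNR]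
  -- 2m ≤ k*m/8
  have h4 : 2 * m ≤ (k:ℝ) * m / 8 := by nlinarith
  calc m * k / 32 ≤ q := by nlinarith
    _ ≤ _ := hQle

lemma pair_bound (N : ℕ) (hN : 16 ≤ N) (d : ℤ) (hd1 : 1 ≤ d) (hdN : d ≤ (N:ℤ)) :
    ∑ k ∈ Finset.Icc 16 N, (if d ≤ (k:ℤ) then (1/(k:ℝ) - 1/((k:ℝ)+1)) else 0)
      ≤ 1/(d:ℝ) := by
  rw [← Finset.sum_filter]
  have hfe : (Finset.Icc 16 N : Finset ℕ).filter (fun k : ℕ => d ≤ (k:ℤ)) = (Finset.Icc (max 16 d.toNat) N : Finset ℕ) := by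
    ext k
    simp only [Finset.mem_filter, Finset.mem_Icc]
    omega
  rw [hfe]
  set a := max 16 d.toNat with ha
  have haN : a ≤ N := by omega
  have ha0 : 0 < a := by omega
  have key : ∑ k ∈ Finset.Icc a N, (1/(k:ℝ) - 1/((k:ℝ)+1))
      = -(1/((N:ℝ)+1)) + 1/(a:ℝ) := by
    have hcongr : ∀ k ∈ Finset.Icc a N,
        (1/(k:ℝ) - 1/((k:ℝ)+1)) =
          ((fun j : ℕ => -(1/(j:ℝ))) (k+1) - (fun j : ℕ => -(1/(j:ℝ))) k) := by
      intro k hk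
      simp only
      push_cast
      ring
    rw [Finset.sum_congr rfl hcongr]
    calc ∑ k ∈ Finset.Icc a N,
          ((fun j : ℕ => -(1/(j:ℝ))) (k+1) - (fun j : ℕ => -(1/(j:ℝ))) k)
        = (fun j : ℕ => -(1/(j:ℝ))) (N+1) - (fun j : ℕ => -(1/(j:ℝ))) a :=
          telescope_Icc (fun j : ℕ => -(1/(j:ℝ))) a N haN
      _ = -(1/((N:ℝ)+1)) + 1/(a:ℝ) := by push_cast; ring
  rw [key]
  have h1 : (0:ℝ) < d := by exact_mod_cast hd1
  have h2 : (d:ℝ) ≤ (a:ℝ) := by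
    have : d ≤ (a:ℤ) := by omega
    exact_mod_cast this
  have h3 : (1:ℝ)/(a:ℝ) ≤ 1/(d:ℝ) := one_div_le_one_div_of_le h1 h2
  have h4 : (0:ℝ) < (N:ℝ)+1 := by positivity
  have : (0:ℝ) ≤ 1/((N:ℝ)+1) := by positivity
  linarith

lemma harmonic_bound (N : ℕ) (hN : 16 ≤ N) :
    Real.log ((N:ℝ)+2) - Real.log 17 ≤ ∑ k ∈ Finset.Icc 16 N, 1/((k:ℝ)+1) := by
  have hterm : ∀ k ∈ Finset.Icc 16 N,
      ((fun j : ℕ => Real.log ((j:ℝ)+1)) (k+1) - (fun j : ℕ => Real.log ((j:ℝ)+1)) k)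
        ≤ 1/((k:ℝ)+1) := by
    intro k hk
    simp only
    have hk1 : (0:ℝ) < (k:ℝ)+1 := by positivity
    have hx : (0:ℝ) < ((k:ℝ)+2)/((k:ℝ)+1) := by positivity
    have := Real.log_le_sub_one_of_pos hx
    rw [Real.log_div (by linarith) (by linarith)] at this
    have he : ((k:ℝ)+2)/((k:ℝ)+1) - 1 = 1/((k:ℝ)+1) := by field_simp; norm_num
    rw [he] at this
    have hc : ((k+1 : ℕ):ℝ) + 1 = (k:ℝ)+2 := by push_cast; ring
    rw [hc]
    exact this
  calc Real.log ((N:ℝ)+2) - Real.log 17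
      = (fun j : ℕ => Real.log ((j:ℝ)+1)) (N+1) - (fun j : ℕ => Real.log ((j:ℝ)+1)) 16 := by
        simp only; push_cast
        rw [show ((N:ℝ)+1+1) = (N:ℝ)+2 by ring]
        norm_num
    _ = ∑ k ∈ Finset.Icc 16 N,
        ((fun j : ℕ => Real.log ((j:ℝ)+1)) (k+1) - (fun j : ℕ => Real.log ((j:ℝ)+1)) k) :=
        (telescope_Icc (fun j : ℕ => Real.log ((j:ℝ)+1)) 16 N hN).symm
    _ ≤ ∑ k ∈ Finset.Icc 16 N, 1/((k:ℝ)+1) := Finset.sum_le_sum hterm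

/-- Consequence of Lemma 1 for integer sets: there are `c > 0` and `N₀` such that any
finite set `S` of integers contained in an interval of length `N ≥ N₀` with `#S ≥ N/4`
contains a point `v` with `∑_{s∈S, s<v} 1/(v-s) ≥ c ln N`. -/
theorem haar_critical_stmt10 :
    ∃ c : ℝ, 0 < c ∧ ∃ N₀ : ℕ,
      ∀ (N : ℕ), N₀ ≤ N →
      ∀ (S : Finset ℤ),
        (∃ a : ℝ, ∀ s ∈ S, a ≤ (s : ℝ) ∧ (s : ℝ) ≤ a + N) →
        (N : ℝ) / 4 ≤ (S.card : ℝ) →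
        ∃ v ∈ S, c * Real.log N ≤
          ∑ s ∈ S.filter (fun s => s < v), 1 / ((v : ℝ) - (s : ℝ)) := by
  classical
  refine ⟨1/64, by norm_num, 300, fun N hN S hint hcard => ?_⟩
  obtain ⟨a, ha⟩ := hint
  by_contra hcon
  push_neg at hcon
  have hNpos : 0 < N := by omega
  have hN16 : 16 ≤ N := by omega
  have hNR : (300:ℝ) ≤ (N:ℝ) := by exact_mod_cast hN
  -- translate
  set b : ℤ := ⌈a⌉ with hbdef
  have hb : ∀ s ∈ S, b ≤ s ∧ s ≤ b + N := by
    intro s hs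
    obtain ⟨h1, h2⟩ := ha s hs
    constructor
    · exact Int.ceil_le.2 h1
    · have hab : a ≤ (b:ℝ) := Int.le_ceil a
      have : (s:ℝ) ≤ (b:ℝ) + N := by linarith
      exact_mod_cast this
  have hm : 0 < S.card := by
    by_contra h
    push_neg at h
    have h0 : S.card = 0 := by omega
    rw [h0] at hcard
    norm_num at hcard
    linarith
  set P := (S ×ˢ S).filter (fun p => p.2 < p.1) with hP
  set T := ∑ p ∈ P, 1/((p.1:ℝ) - (p.2:ℝ)) with hT
  -- double sum identity
  have hTP : ∑ v ∈ S, ∑ s ∈ S.filter (fun s => s < v), 1 / ((v : ℝ) - (s : ℝ)) = T := by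
    rw [hT, hP, Finset.sum_filter, Finset.sum_product]
    exact Finset.sum_congr rfl fun v _ => Finset.sum_filter _ _
  -- differences
  have hdiff : ∀ p ∈ P, 1 ≤ p.1 - p.2 ∧ p.1 - p.2 ≤ (N:ℤ) := by
    intro p hp
    rw [hP, Finset.mem_filter, Finset.mem_product] at hp
    obtain ⟨⟨h1, h2⟩, h3⟩ := hp
    have hb1 := hb p.1 h1
    have hb2 := hb p.2 h2
    omega
  -- step 1 : per-k bound
  have step1 : ∀ k ∈ Finset.Icc 16 N, (S.card:ℝ)/(32*((k:ℝ)+1)) ≤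
      (1/(k:ℝ) - 1/((k:ℝ)+1)) * ((P.filter (fun p => p.1 - p.2 ≤ (k:ℤ))).card : ℝ) := by
    intro k hk
    rw [Finset.mem_Icc] at hk
    have hR := Rk_bound N k S b hb hk.1 hk.2 hcard hNpos
    rw [← hP] at hR
    have hk0 : (0:ℝ) < (k:ℝ) := by
      have : 0 < k := by omega
      exact_mod_cast this
    have hck : (1/(k:ℝ) - 1/((k:ℝ)+1)) = 1/((k:ℝ)*((k:ℝ)+1)) := by
      field_simp
      ring
    rw [hck]
    calc (S.card:ℝ)/(32*((k:ℝ)+1))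
        = (1/((k:ℝ)*((k:ℝ)+1))) * ((S.card:ℝ) * (k:ℝ)/32) := by
          field_simp
      _ ≤ _ := mul_le_mul_of_nonneg_left hR (by positivity)
  -- step 2 : sum and swap
  have step2 : ∑ k ∈ Finset.Icc 16 N, (S.card:ℝ)/(32*((k:ℝ)+1)) ≤ T := by
    calc ∑ k ∈ Finset.Icc 16 N, (S.card:ℝ)/(32*((k:ℝ)+1))
        ≤ ∑ k ∈ Finset.Icc 16 N,
            (1/(k:ℝ) - 1/((k:ℝ)+1)) * ((P.filter (fun p => p.1 - p.2 ≤ (k:ℤ))).card : ℝ) :=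
          Finset.sum_le_sum step1
      _ = ∑ k ∈ Finset.Icc 16 N, ∑ p ∈ P,
            (if p.1 - p.2 ≤ (k:ℤ) then (1/(k:ℝ) - 1/((k:ℝ)+1)) else 0) := by
          apply Finset.sum_congr rfl
          intro k _
          rw [← Finset.sum_filter, Finset.sum_const, nsmul_eq_mul, mul_comm]
      _ = ∑ p ∈ P, ∑ k ∈ Finset.Icc 16 N,
            (if p.1 - p.2 ≤ (k:ℤ) then (1/(k:ℝ) - 1/((k:ℝ)+1)) else 0) := Finset.sum_comm
      _ ≤ ∑ p ∈ P, 1/((p.1:ℝ) - (p.2:ℝ)) := by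
          apply Finset.sum_le_sum
          intro p hp
          obtain ⟨hd1, hd2⟩ := hdiff p hp
          have := pair_bound N hN16 (p.1 - p.2) hd1 hd2
          have hcast : ((p.1 - p.2 : ℤ) : ℝ) = (p.1:ℝ) - (p.2:ℝ) := by push_cast; ring
          rwa [hcast] at this
      _ = T := hT.symm
  -- step 3 : harmonic part
  have step3 : (S.card:ℝ)/32 * (Real.log ((N:ℝ)+2) - Real.log 17) ≤
      ∑ k ∈ Finset.Icc 16 N, (S.card:ℝ)/(32*((k:ℝ)+1)) := by
    have := harmonic_bound N hN16
    calc (S.card:ℝ)/32 * (Real.log ((N:ℝ)+2) - Real.log 17)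
        ≤ (S.card:ℝ)/32 * ∑ k ∈ Finset.Icc 16 N, 1/((k:ℝ)+1) :=
          mul_le_mul_of_nonneg_left this (by positivity)
      _ = ∑ k ∈ Finset.Icc 16 N, (S.card:ℝ)/(32*((k:ℝ)+1)) := by
          rw [Finset.mul_sum]
          apply Finset.sum_congr rfl
          intro k _
          rw [div_mul_div_comm]
          ring_nf
  -- step 4 : log comparison
  have step4 : (S.card:ℝ)/64 * Real.log N ≤
      (S.card:ℝ)/32 * (Real.log ((N:ℝ)+2) - Real.log 17) := by
    have l1 : Real.log 17 * 2 = Real.log 289 := by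
      rw [show (289:ℝ) = 17^2 by norm_num, Real.log_pow]
      push_cast
      ring
    have l2 : Real.log 289 ≤ Real.log (N:ℝ) :=
      Real.log_le_log (by norm_num) (by linarith)
    have l3 : Real.log (N:ℝ) ≤ Real.log ((N:ℝ)+2) :=
      Real.log_le_log (by linarith) (by linarith)
    have hx : Real.log (N:ℝ) ≤ 2 * (Real.log ((N:ℝ)+2) - Real.log 17) := by linarith
    calc (S.card:ℝ)/64 * Real.log N
        ≤ (S.card:ℝ)/64 * (2 * (Real.log ((N:ℝ)+2) - Real.log 17)) :=
          mul_le_mul_of_nonneg_left hx (by positivity)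
      _ = (S.card:ℝ)/32 * (Real.log ((N:ℝ)+2) - Real.log 17) := by ring
  -- combine lower bound
  have hbig : (S.card:ℝ)/64 * Real.log N ≤ T := le_trans step4 (le_trans step3 step2)
  -- upper bound from hcon
  have hne : S.Nonempty := Finset.card_pos.mp hm
  have hsmall : T < (S.card:ℝ) * (1/64 * Real.log N) := by
    rw [← hTP]
    calc ∑ v ∈ S, ∑ s ∈ S.filter (fun s => s < v), 1 / ((v : ℝ) - (s : ℝ))
        < ∑ _v ∈ S, 1/64 * Real.log N := Finset.sum_lt_sum_of_nonempty hne hcon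
      _ = (S.card:ℝ) * (1/64 * Real.log N) := by
          rw [Finset.sum_const, nsmul_eq_mul]
  have : (S.card:ℝ) * (1/64 * Real.log N) = (S.card:ℝ)/64 * Real.log N := by ring
  linarith
end

section
/- There exists a numerical constant c > 0 such that for every even integer j > 0 and every set K ⊆ {0, 1, …, 2^j − 1} with #K ≥ 2^{j−1}, there exist real numbers 0 ≤ t_1 < t_2 < … < t_m ≤ 2^{j+1} with m ≥ 2^{j/2 − 2} such that for every i with 2 ≤ i ≤ m, Σ_{k∈K : t_{i−1}/2 < k ≤ t_i/2 − 1} (t_i − 2k)^{-1} ≥ c · j. -/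
open Finset

lemma harm_bounds (R : ℕ) :
    (R:ℝ)/2 ≤ ∑ d ∈ Finset.Ico 1 (2^R : ℕ), ((d:ℝ))⁻¹ ∧
    ∑ d ∈ Finset.Ico 1 (2^R : ℕ), ((d:ℝ))⁻¹ ≤ (R:ℝ) := by
  induction R with
  | zero => simp
  | succ R ih =>
    have h1 : (1:ℕ) ≤ 2^R := Nat.one_le_two_pow
    have h2 : (2:ℕ)^R ≤ 2^(R+1) := by
      apply Nat.pow_le_pow_right <;> omega
    rw [← Finset.sum_Ico_consecutive (fun d : ℕ => ((d:ℝ))⁻¹) h1 h2]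
    have hcard : (Finset.Ico (2^R : ℕ) (2^(R+1) : ℕ)).card = 2^R := by
      rw [Nat.card_Ico]; omega
    have blockLo : (1:ℝ)/2 ≤ ∑ d ∈ Finset.Ico (2^R : ℕ) (2^(R+1) : ℕ), ((d:ℝ))⁻¹ := by
      have key := Finset.card_nsmul_le_sum (Finset.Ico (2^R : ℕ) (2^(R+1) : ℕ))
        (fun d : ℕ => ((d:ℝ))⁻¹) ((2:ℝ)^(R+1))⁻¹ ?_
      · rw [hcard] at key
        have : ((2:ℕ)^R : ℕ) • ((2:ℝ)^(R+1))⁻¹ = 1/2 := by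
          simp only [nsmul_eq_mul, Nat.cast_pow, Nat.cast_ofNat, pow_succ]
          field_simp
        rw [this] at key; exact key
      · intro d hd
        simp only [Finset.mem_Ico] at hd
        apply inv_anti₀
        · have : (1:ℝ) ≤ (d:ℝ) := by exact_mod_cast h1.trans hd.1
          linarith
        · have : (d:ℝ) < ((2^(R+1) : ℕ) : ℝ) := by exact_mod_cast hd.2
          push_cast at this; linarith
    have blockHi : ∑ d ∈ Finset.Ico (2^R : ℕ) (2^(R+1) : ℕ), ((d:ℝ))⁻¹ ≤ 1 := by
      have key := Finset.sum_le_card_nsmul (Finset.Ico (2^R : ℕ) (2^(R+1) : ℕ))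
        (fun d : ℕ => ((d:ℝ))⁻¹) ((2:ℝ)^R)⁻¹ ?_
      · rw [hcard] at key
        have : ((2:ℕ)^R : ℕ) • ((2:ℝ)^R)⁻¹ = 1 := by
          simp [nsmul_eq_mul]
        rw [this] at key; exact key
      · intro d hd
        simp only [Finset.mem_Ico] at hd
        apply inv_anti₀
        · positivity
        · exact_mod_cast hd.1
    refine ⟨?_, ?_⟩
    · push_cast; linarith [ih.1]
    · push_cast; linarith [ih.2]

lemma strictMono_fin_spacing {n : ℕ} (f : Fin n → ℕ) (hf : StrictMono f) :
    ∀ (k : ℕ) (p q : Fin n), (q : ℕ) = (p : ℕ) + k → f p + k ≤ f q := by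
  intro k
  induction k with
  | zero =>
    intro p q h
    have : p = q := Fin.ext (by omega)
    subst this; omega
  | succ k ih =>
    intro p q h
    have hlt : (p:ℕ) + k < n := by have := q.isLt; omega
    have h1 := ih p ⟨(p:ℕ)+k, hlt⟩ rfl
    have h2 : f ⟨(p:ℕ)+k, hlt⟩ < f q := hf (by simp [Fin.lt_def]; omega)
    omega

lemma key_step (K : Finset ℕ) (D a b : ℕ) (hspace : a + D ≤ b) (cj : ℝ)
    (hg : cj ≤ ∑ k ∈ K.filter (fun k => k < b ∧ b < k + D), (2*(b:ℝ) - 2*(k:ℝ))⁻¹) :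
    cj ≤ ∑ k ∈ K.filter (fun k : ℕ =>
        (2*(a:ℝ))/2 < (k:ℝ) ∧ (k:ℝ) ≤ (2*(b:ℝ))/2 - 1), (2*(b:ℝ) - 2*(k:ℝ))⁻¹ := by
  classical
  have hiff : ∀ k : ℕ, ((2*(a:ℝ))/2 < (k:ℝ) ∧ (k:ℝ) ≤ (2*(b:ℝ))/2 - 1) ↔ (a < k ∧ k < b) := by
    intro k
    rw [show (2*(a:ℝ))/2 = (a:ℝ) by ring, show (2*(b:ℝ))/2 - 1 = (b:ℝ) - 1 by ring]
    constructor
    · rintro ⟨h1, h2⟩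
      have hc : (k:ℕ) + 1 ≤ b := by exact_mod_cast (by linarith : (k:ℝ)+1 ≤ (b:ℝ))
      exact ⟨by exact_mod_cast h1, by omega⟩
    · rintro ⟨h1, h2⟩
      have c1 : (a:ℝ) < (k:ℝ) := by exact_mod_cast h1
      have c2 : ((k:ℕ):ℝ)+1 ≤ (b:ℝ) := by exact_mod_cast h2
      exact ⟨c1, by linarith⟩
  have hfeq : K.filter (fun k : ℕ =>
        (2*(a:ℝ))/2 < (k:ℝ) ∧ (k:ℝ) ≤ (2*(b:ℝ))/2 - 1)
      = K.filter (fun k : ℕ => a < k ∧ k < b) :=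
    Finset.filter_congr (fun k _ => by
      exact hiff k)
  have hsub : K.filter (fun k => k < b ∧ b < k + D)
      ⊆ K.filter (fun k : ℕ => a < k ∧ k < b) := by
    intro k hk
    simp only [Finset.mem_filter] at hk ⊢
    exact ⟨hk.1, by omega, hk.2.1⟩
  have hsum : ∑ k ∈ K.filter (fun k => k < b ∧ b < k + D), (2*(b:ℝ) - 2*(k:ℝ))⁻¹
      ≤ ∑ k ∈ K.filter (fun k : ℕ => a < k ∧ k < b), (2*(b:ℝ) - 2*(k:ℝ))⁻¹ := by
    apply Finset.sum_le_sum_of_subset_of_nonneg hsub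
    intro k hk _
    simp only [Finset.mem_filter] at hk
    have hc : (k:ℝ) < (b:ℝ) := by exact_mod_cast hk.2.2
    have hc2 : 0 < 2*(b:ℝ) - 2*k := by linarith
    positivity
  rw [hfeq]
  linarith

set_option maxHeartbeats 1600000 in
/-- Key step in the proof of Proposition 1: there is `c > 0` such that for every even
`j > 0` and every `K ⊆ {0,…,2^j - 1}` with `#K ≥ 2^{j-1}`, there are points
`0 ≤ t 1 < … < t m ≤ 2^{j+1}` with `m ≥ 2^{j/2-2}` such that for all `2 ≤ i ≤ m`,
`∑_{k∈K, t (i-1)/2 < k ≤ t i/2 - 1} (t i - 2k)⁻¹ ≥ c j`. -/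
theorem haar_critical_stmt11 :
    ∃ c : ℝ, 0 < c ∧
      ∀ (j : ℕ), 0 < j → Even j →
      ∀ (K : Finset ℕ), K ⊆ Finset.range (2 ^ j) → 2 ^ (j - 1) ≤ K.card →
      ∃ (m : ℕ) (t : ℕ → ℝ),
        (2 : ℝ) ^ ((j : ℝ) / 2 - 2) ≤ (m : ℝ) ∧
        (∀ i ∈ Finset.Icc 1 m, ∀ i' ∈ Finset.Icc 1 m, i < i' → t i < t i') ∧
        (∀ i ∈ Finset.Icc 1 m, t i ∈ Set.Icc (0 : ℝ) (2 ^ (j + 1))) ∧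
        (∀ i, 2 ≤ i → i ≤ m →
          c * (j : ℝ) ≤
            ∑ k ∈ K.filter (fun k : ℕ => t (i - 1) / 2 < (k : ℝ) ∧ (k : ℝ) ≤ t i / 2 - 1),
              (t i - 2 * k)⁻¹) := by
  classical
  refine ⟨1/384, by norm_num, ?_⟩
  intro j hj hje K hK hcard
  obtain ⟨h, hh⟩ := hje
  by_cases hsmall : h < 2
  · -- j = 2 : take m = 1, vacuous conditions
    have hj2 : j = 2 := by omega
    subst hj2
    refine ⟨1, fun _ => 0, ?_, ?_, ?_, ?_⟩
    · have he : ((2:ℕ):ℝ)/2 - 2 = (-1 : ℝ) := by norm_num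
      rw [he, Real.rpow_neg_one]; norm_num
    · intro i hi i' hi' hlt
      simp only [Finset.mem_Icc] at hi hi'; omega
    · intro i _
      exact ⟨le_refl _, by positivity⟩
    · intro i h2 h1; omega
  push_neg at hsmall
  -- main case: j = 2h, h ≥ 2
  set R := h - 1 with hRdef
  set D := (2^R : ℕ) with hDdef
  set N := (2^j : ℕ) with hNdef
  have hR1 : 1 ≤ R := by omega
  have hRj : R + 3 ≤ j := by omega
  have hD1 : 1 ≤ D := Nat.one_le_two_pow
  have hDN : D ≤ N := by
    apply Nat.pow_le_pow_right (by norm_num); omega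
  -- the local sum function
  set g : ℕ → ℝ := fun s =>
    ∑ k ∈ K.filter (fun k => k < s ∧ s < k + D), (2*(s:ℝ) - 2*(k:ℝ))⁻¹ with hgdef
  set Sval : ℝ := ∑ d ∈ Finset.Ico 1 D, (2*(d:ℝ))⁻¹ with hSdef
  have hSval : Sval = 2⁻¹ * ∑ d ∈ Finset.Ico 1 D, ((d:ℝ))⁻¹ := by
    rw [hSdef, Finset.mul_sum]
    exact Finset.sum_congr rfl (fun d _ => by rw [mul_inv])
  have hSlo : (R:ℝ)/4 ≤ Sval := by
    rw [hSval]; have := (harm_bounds R).1; rw [← hDdef] at this; linarith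
  have hShi : Sval ≤ (R:ℝ)/2 := by
    rw [hSval]; have := (harm_bounds R).2; rw [← hDdef] at this; linarith
  -- Step 2: pointwise upper bound
  have gupper : ∀ s : ℕ, g s ≤ Sval := by
    intro s
    have h1 : g s = ∑ k ∈ K.filter (fun k => k < s ∧ s < k + D),
        (2*(((s - k : ℕ)):ℝ))⁻¹ := by
      apply Finset.sum_congr rfl
      intro k hk
      simp only [Finset.mem_filter] at hk
      congr 1
      have hks : k ≤ s := le_of_lt hk.2.1
      push_cast [Nat.cast_sub hks]; ring
    have h2 : ∑ k ∈ K.filter (fun k => k < s ∧ s < k + D), (2*(((s - k : ℕ)):ℝ))⁻¹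
        = ∑ d ∈ (K.filter (fun k => k < s ∧ s < k + D)).image (fun k => s - k),
            (2*((d:ℝ)))⁻¹ := by
      rw [Finset.sum_image]
      intro x hx y hy hxy
      simp only [Finset.mem_coe, Finset.mem_filter] at hx hy
      simp only at hxy
      omega
    rw [h1, h2, hSdef]
    apply Finset.sum_le_sum_of_subset_of_nonneg
    · intro d hd
      simp only [Finset.mem_image, Finset.mem_filter] at hd
      obtain ⟨k, hk, rfl⟩ := hd
      simp only [Finset.mem_Ico]; omega
    · intro d _ _; positivity
  have gnonneg : ∀ s : ℕ, 0 ≤ g s := by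
    intro s
    apply Finset.sum_nonneg
    intro k hk
    simp only [Finset.mem_filter] at hk
    have : (k:ℝ) < s := by exact_mod_cast hk.2.1
    have : 0 < 2*(s:ℝ) - 2*k := by linarith
    positivity
  -- Step 3: inner sum identity
  have inner_eq : ∀ k : ℕ, k + D ≤ N →
      ∑ s ∈ Finset.range (N+1),
        (if k < s ∧ s < k + D then (2*(s:ℝ) - 2*(k:ℝ))⁻¹ else 0) = Sval := by
    intro k hk
    rw [← Finset.sum_filter]
    have hfil : (Finset.range (N+1)).filter (fun s => k < s ∧ s < k + D)
        = Finset.Ioo k (k+D) := by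
      ext s
      simp only [Finset.mem_filter, Finset.mem_range, Finset.mem_Ioo]
      omega
    have himg : Finset.Ioo k (k+D) = (Finset.Ico 1 D).image (fun d => k + d) := by
      ext s
      simp only [Finset.mem_Ioo, Finset.mem_image, Finset.mem_Ico]
      constructor
      · intro hs; exact ⟨s - k, by omega, by omega⟩
      · rintro ⟨d, hd, rfl⟩; omega
    rw [hfil, himg, Finset.sum_image (by intro x _ y _ hxy; simp only at hxy; omega)]
    apply Finset.sum_congr rfl
    intro d _
    congr 1
    push_cast; ring
  -- Step 4: total lower bound
  set K' := K.filter (fun k => k + D ≤ N) with hK'def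
  have hTswap : ∑ s ∈ Finset.range (N+1), g s
      = ∑ k ∈ K, ∑ s ∈ Finset.range (N+1),
          (if k < s ∧ s < k + D then (2*(s:ℝ) - 2*(k:ℝ))⁻¹ else 0) := by
    rw [← Finset.sum_comm]
    apply Finset.sum_congr rfl
    intro s _
    rw [hgdef]
    exact Finset.sum_filter _ _
  have hite_nonneg : ∀ k s : ℕ,
      0 ≤ (if k < s ∧ s < k + D then (2*(s:ℝ) - 2*(k:ℝ))⁻¹ else 0) := by
    intro k s
    split
    · rename_i hc
      have : (k:ℝ) < s := by exact_mod_cast hc.1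
      have : 0 < 2*(s:ℝ) - 2*k := by linarith
      positivity
    · exact le_rfl
  have hTlow : (K'.card : ℝ) * Sval ≤ ∑ s ∈ Finset.range (N+1), g s := by
    rw [hTswap]
    have step1 : ∑ k ∈ K', ∑ s ∈ Finset.range (N+1),
        (if k < s ∧ s < k + D then (2*(s:ℝ) - 2*(k:ℝ))⁻¹ else 0)
        ≤ ∑ k ∈ K, ∑ s ∈ Finset.range (N+1),
        (if k < s ∧ s < k + D then (2*(s:ℝ) - 2*(k:ℝ))⁻¹ else 0) := by
      apply Finset.sum_le_sum_of_subset_of_nonneg (Finset.filter_subset _ _)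
      intro k _ _
      exact Finset.sum_nonneg (fun s _ => hite_nonneg k s)
    have step2 : ∑ k ∈ K', ∑ s ∈ Finset.range (N+1),
        (if k < s ∧ s < k + D then (2*(s:ℝ) - 2*(k:ℝ))⁻¹ else 0)
        = (K'.card : ℝ) * Sval := by
      rw [Finset.sum_congr rfl (fun k hk => inner_eq k (Finset.mem_filter.mp hk).2)]
      rw [Finset.sum_const, nsmul_eq_mul]
    linarith [step1, step2.symm.le]
  -- K' is large
  have hK'card : K.card ≤ K'.card + D := by
    have hsplit := Finset.card_filter_add_card_filter_not
      (s := K) (p := fun k => k + D ≤ N)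
    have hbad : K.filter (fun k => ¬ (k + D ≤ N)) ⊆ Finset.Ico (N+1-D) N := by
      intro k hk
      simp only [Finset.mem_filter, not_le] at hk
      have hkN : k < N := Finset.mem_range.mp (hK hk.1)
      simp only [Finset.mem_Ico]
      omega
    have hb2 := Finset.card_le_card hbad
    rw [Nat.card_Ico] at hb2
    have hIco : N - (N+1-D) = D - 1 := by omega
    rw [hIco] at hb2
    simp only [hK'def]
    omega
  -- the set of good points
  set Good := (Finset.range (N+1)).filter (fun s => (R:ℝ)/64 ≤ g s) with hGdef
  have hThigh : ∑ s ∈ Finset.range (N+1), g s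
      ≤ (Good.card : ℝ) * ((R:ℝ)/2) + ((N:ℝ)+1) * ((R:ℝ)/64) := by
    rw [← Finset.sum_filter_add_sum_filter_not (Finset.range (N+1))
      (fun s => (R:ℝ)/64 ≤ g s) g]
    gcongr ?_ + ?_
    · calc ∑ s ∈ Good, g s ≤ Good.card • ((R:ℝ)/2) :=
            Finset.sum_le_card_nsmul _ _ _ (fun s _ => le_trans (gupper s) hShi)
        _ = (Good.card : ℝ) * ((R:ℝ)/2) := by rw [nsmul_eq_mul]
    · have hb := Finset.sum_le_card_nsmul
        ((Finset.range (N+1)).filter (fun s => ¬ ((R:ℝ)/64 ≤ g s))) g ((R:ℝ)/64)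
        (fun s hs => by
          simp only [Finset.mem_filter, not_le] at hs
          exact le_of_lt hs.2)
      have hc : (((Finset.range (N+1)).filter (fun s => ¬ ((R:ℝ)/64 ≤ g s))).card : ℝ)
          ≤ (N:ℝ)+1 := by
        have := Finset.card_filter_le (Finset.range (N+1))
          (fun s => ¬ ((R:ℝ)/64 ≤ g s))
        rw [Finset.card_range] at this
        exact_mod_cast this
      rw [nsmul_eq_mul] at hb
      have hR0 : (0:ℝ) ≤ (R:ℝ)/64 := by positivity
      nlinarith
  -- numeric conclusion: Good.card ≥ 2^j/8
  have hX1 : (1:ℝ) ≤ (2:ℝ)^j := one_le_pow₀ (by norm_num)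
  have hDX : (D:ℝ) * 8 ≤ (2:ℝ)^j := by
    have : (D:ℝ) * 8 = (2:ℝ)^(R+3) := by
      rw [hDdef]; push_cast; rw [pow_add]; norm_num
    rw [this]
    exact pow_le_pow_right₀ (by norm_num) hRj
  have hKX : (2:ℝ)^j / 2 ≤ (K.card : ℝ) := by
    have hj1 : j - 1 + 1 = j := by omega
    have : ((2^(j-1) : ℕ) : ℝ) ≤ (K.card : ℝ) := by exact_mod_cast hcard
    have h2 : (2:ℝ)^j = (2:ℝ)^(j-1) * 2 := by
      rw [← pow_succ, hj1]
    push_cast at this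
    linarith
  have hNX : (N:ℝ) = (2:ℝ)^j := by rw [hNdef]; push_cast; ring
  have hGoodX : (2:ℝ)^j / 8 ≤ (Good.card : ℝ) := by
    have hK'X : (2:ℝ)^j/2 - (D:ℝ) ≤ (K'.card : ℝ) := by
      have : (K.card : ℝ) ≤ (K'.card : ℝ) + (D:ℝ) := by exact_mod_cast hK'card
      linarith
    have hfac : (0:ℝ) ≤ (2:ℝ)^j/2 - (D:ℝ) := by linarith
    have hT2 : ((2:ℝ)^j/2 - (D:ℝ)) * ((R:ℝ)/4) ≤ (K'.card : ℝ) * Sval := by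
      apply mul_le_mul hK'X hSlo (by positivity) (Nat.cast_nonneg _)
    have hcomb : ((2:ℝ)^j/2 - (D:ℝ)) * ((R:ℝ)/4)
        ≤ (Good.card : ℝ) * ((R:ℝ)/2) + ((2:ℝ)^j+1) * ((R:ℝ)/64) := by
      rw [hNX] at hThigh
      linarith [hTlow, hT2, hThigh]
    have hRr : (1:ℝ) ≤ (R:ℝ) := by exact_mod_cast hR1
    have hfinal : (2:ℝ)^j/8 * ((R:ℝ)/2) ≤ (Good.card : ℝ) * ((R:ℝ)/2) := by
      nlinarith [hcomb, hDX, hX1, hRr]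
    have hRpos : (0:ℝ) < (R:ℝ)/2 := by linarith
    exact le_of_mul_le_mul_right hfinal hRpos
  -- selection of spaced good points
  set m := (2^(h-2) : ℕ) with hmdef
  have hm1 : 1 ≤ m := Nat.one_le_two_pow
  have hmD : (m * D : ℕ) ≤ Good.card := by
    have hreal : ((m * D : ℕ) : ℝ) ≤ (Good.card : ℝ) := by
      have heq : ((m * D : ℕ) : ℝ) = (2:ℝ)^j / 8 := by
        push_cast [hmdef, hDdef]
        rw [← pow_add]
        have hexp : h - 2 + (h - 1) = j - 3 := by omega
        rw [hexp]
        have hj3 : j - 3 + 3 = j := by omega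
        have : (2:ℝ)^j = (2:ℝ)^(j-3) * 8 := by
          rw [← hj3, pow_add]; norm_num
        rw [this]; ring
      rw [heq]; exact hGoodX
    exact_mod_cast hreal
  set n := Good.card with hndef
  have hn0 : 0 < n := lt_of_lt_of_le (by positivity) hmD
  set e := Good.orderEmbOfFin (rfl : Good.card = n) with hedef
  have hemono : StrictMono e := (Good.orderEmbOfFin rfl).strictMono
  have hemem : ∀ p : Fin n, (e p : ℕ) ∈ Good := fun p => Good.orderEmbOfFin_mem rfl p
  have hidx : ∀ i : ℕ, min ((i-1)*D) (n-1) < n := by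
    intro i
    have : min ((i-1)*D) (n-1) ≤ n - 1 := min_le_right _ _
    omega
  have hidxval : ∀ i : ℕ, 1 ≤ i → i ≤ m → min ((i-1)*D) (n-1) = (i-1)*D := by
    intro i h1 h2
    have hle : (i-1)*D ≤ (m-1)*D := Nat.mul_le_mul_right _ (by omega)
    have heq : (m-1)*D = m*D - D := by rw [Nat.sub_mul, one_mul]
    omega
  refine ⟨m, fun i => 2 * ((e ⟨min ((i-1)*D) (n-1), hidx i⟩ : ℕ) : ℝ), ?_, ?_, ?_, ?_⟩
  · -- m is large enough
    have hjh : (j:ℝ)/2 - 2 = ((h - 2 : ℕ) : ℝ) := by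
      have : (j:ℝ) = 2*(h:ℝ) := by rw [hh]; push_cast; ring
      rw [this, Nat.cast_sub hsmall]; push_cast; ring
    rw [hjh, Real.rpow_natCast]
    rw [hmdef]; push_cast; exact le_refl _
  · -- strict monotonicity
    intro i hi i' hi' hlt
    simp only [Finset.mem_Icc] at hi hi'
    have hfin : (⟨min ((i-1)*D) (n-1), hidx i⟩ : Fin n)
        < (⟨min ((i'-1)*D) (n-1), hidx i'⟩ : Fin n) := by
      rw [Fin.mk_lt_mk, hidxval i hi.1 hi.2, hidxval i' hi'.1 hi'.2]
      exact (Nat.mul_lt_mul_right (by omega : 0 < D)).mpr (by omega)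
    have h2 := hemono hfin
    have h3 : ((e ⟨min ((i-1)*D) (n-1), hidx i⟩ : ℕ) : ℝ)
        < ((e ⟨min ((i'-1)*D) (n-1), hidx i'⟩ : ℕ) : ℝ) := by exact_mod_cast h2
    simp only
    linarith
  · -- range
    intro i hi
    simp only [Finset.mem_Icc] at hi
    constructor
    · positivity
    · have hmem : (e ⟨min ((i-1)*D) (n-1), hidx i⟩ : ℕ)
          ∈ (Finset.range (N+1)).filter (fun s => (R:ℝ)/64 ≤ g s) :=
        hemem ⟨min ((i-1)*D) (n-1), hidx i⟩
      simp only [Finset.mem_filter, Finset.mem_range] at hmem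
      have hsN : (e ⟨min ((i-1)*D) (n-1), hidx i⟩ : ℕ) ≤ N := by omega
      have hc : ((e ⟨min ((i-1)*D) (n-1), hidx i⟩ : ℕ) : ℝ) ≤ (N:ℝ) := by exact_mod_cast hsN
      rw [hNX] at hc
      show 2 * ((e ⟨min ((i-1)*D) (n-1), hidx i⟩ : ℕ) : ℝ) ≤ (2:ℝ)^(j+1)
      rw [pow_succ]
      linarith
  · -- the main estimate
    intro i h2i him
    have hi1 : 1 ≤ i - 1 := by omega
    have hi1m : i - 1 ≤ m := by omega
    have hpval : min ((i-1-1)*D) (n-1) = (i-1-1)*D := hidxval (i-1) hi1 hi1m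
    have hqval : min ((i-1)*D) (n-1) = (i-1)*D := hidxval i (by omega) him
    have hspace : (e ⟨min ((i-1-1)*D) (n-1), hidx (i-1)⟩ : ℕ) + D
        ≤ (e ⟨min ((i-1)*D) (n-1), hidx i⟩ : ℕ) := by
      apply strictMono_fin_spacing e hemono D
      show min ((i-1)*D) (n-1) = min ((i-1-1)*D) (n-1) + D
      rw [hpval, hqval]
      have f1 : (i-1-1)*D = (i-1)*D - 1*D := by rw [← Nat.sub_mul]
      have f2 : D ≤ (i-1)*D := Nat.le_mul_of_pos_left D (by omega)
      omega
    have hbGood : (R:ℝ)/64 ≤ g (e ⟨min ((i-1)*D) (n-1), hidx i⟩ : ℕ) := by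
      have hmem : (e ⟨min ((i-1)*D) (n-1), hidx i⟩ : ℕ)
          ∈ (Finset.range (N+1)).filter (fun s => (R:ℝ)/64 ≤ g s) :=
        hemem ⟨min ((i-1)*D) (n-1), hidx i⟩
      simp only [Finset.mem_filter] at hmem
      exact hmem.2
    have hcj : (1:ℝ)/384 * (j:ℝ) ≤ (R:ℝ)/64 := by
      have hjr : (j:ℝ) = 2*(h:ℝ) := by rw [hh]; push_cast; ring
      have hRr : (R:ℝ) = (h:ℝ) - 1 := by
        rw [hRdef, Nat.cast_sub (by omega)]; push_cast; ring
      have hhr : (2:ℝ) ≤ (h:ℝ) := by exact_mod_cast hsmall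
      rw [hjr, hRr]; linarith
    exact key_step K D (e ⟨min ((i-1-1)*D) (n-1), hidx (i-1)⟩ : ℕ)
      (e ⟨min ((i-1)*D) (n-1), hidx i⟩ : ℕ) hspace _ (le_trans hcj hbGood)
end
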